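/- Let g:[0,∞)→[0,∞) be continuous with g(0)=0, and fix s ≥ 0. For every a ∈ [0, g(s)] set w(a) = inf{r ∈ [0,s] : m_g(r,s) = a}. Then g(w(a)) = a for every a ∈ [0, g(s)], and for all 0 ≤ a ≤ b ≤ g(s) one has m_g(w(a), w(b)) = a, and consequently d_g(w(a), w(b)) = b − a. -/

import Mathlib

open Set Filter NNReal

/-- `m_g(s,t) = inf { g(r) : s ∧ t ≤ r ≤ s ∨ t }`. -/
noncomputable def mg (g : ℝ≥0 → ℝ) (s t : ℝ≥0) : ℝ :=
  sInf (g '' Set.Icc (min s t) (max s t))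

/-- `d_g(s,t) = g(s) + g(t) - 2 m_g(s,t)`. -/
noncomputable def dg (g : ℝ≥0 → ℝ) (s t : ℝ≥0) : ℝ :=
  g s + g t - 2 * mg g s t

/-- `w(a) = inf { r ∈ [0,s] : m_g(r,s) = a }`. -/
noncomputable def wg (g : ℝ≥0 → ℝ) (s : ℝ≥0) (a : ℝ) : ℝ≥0 :=
  sInf {r : ℝ≥0 | r ≤ s ∧ mg g r s = a}

/-!
If `g 0 ≤ a ≤ m_g(p,s)` with `p ≤ s`, the last time `t ≤ p` at which `g ≤ a` satisfies
`g t = a` by the intermediate value theorem on `[t, p]`, and `g ≥ a` on `[t, s]`, so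
`m_g(t,s) = a`. Applied with `p = s` this shows that the set defining `w(a)` is nonempty; its
infimum lies in it because `{g ≥ a}` is closed; applied with `p = w(a)` it shows `g (w(a)) = a`;
applied with `p = w(b)` it shows `w(a) ≤ w(b)`. Then `g ≥ a` on `[w(a), w(b)] ⊆ [w(a), s]` with
equality at `w(a)`.
-/

section

variable {g : ℝ≥0 → ℝ} {r s p : ℝ≥0} {a b : ℝ}

lemma mg_of_le (g : ℝ≥0 → ℝ) (h : r ≤ s) : mg g r s = sInf (g '' Icc r s) := by
  rw [mg, min_eq_left h, max_eq_right h]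

lemma mg_self (g : ℝ≥0 → ℝ) (s : ℝ≥0) : mg g s s = g s := by
  rw [mg_of_le g le_rfl, Icc_self, image_singleton, csInf_singleton]

lemma mg_le_apply (hg : Continuous g) {x : ℝ≥0} (hrx : r ≤ x) (hxs : x ≤ s) :
    mg g r s ≤ g x := by
  rw [mg_of_le g (hrx.trans hxs)]
  exact csInf_le (isCompact_Icc.bddBelow_image hg.continuousOn) (mem_image_of_mem g ⟨hrx, hxs⟩)

lemma le_mg (hrs : r ≤ s) (h : ∀ x ∈ Icc r s, a ≤ g x) : a ≤ mg g r s := by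
  rw [mg_of_le g hrs]
  exact le_csInf ((nonempty_Icc.2 hrs).image g) (forall_mem_image.2 h)

lemma exists_le_apply_eq_mg_eq_of_le_mg (hg : Continuous g) (hps : p ≤ s) (h0a : g 0 ≤ a)
    (hap : a ≤ mg g p s) : ∃ t ≤ p, g t = a ∧ mg g t s = a := by
  set T := {r : ℝ≥0 | r ≤ p ∧ g r ≤ a}
  have hT : BddAbove T := ⟨p, fun _ hr => hr.1⟩
  have hTc : IsClosed T := isClosed_Iic.inter (isClosed_Iic.preimage hg)
  have htT : sSup T ∈ T := hTc.csSup_mem ⟨0, bot_le, h0a⟩ hT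
  set t := sSup T
  have hpa : a ≤ g p := hap.trans (mg_le_apply hg le_rfl hps)
  have hgt : g t = a := by
    obtain ⟨x, ⟨htx, hxp⟩, hgx⟩ := intermediate_value_Icc htT.1 hg.continuousOn ⟨htT.2, hpa⟩
    rwa [le_antisymm (le_csSup hT ⟨hxp, hgx.le⟩) htx] at hgx
  have hts : t ≤ s := htT.1.trans hps
  refine ⟨t, htT.1, hgt, le_antisymm (hgt ▸ mg_le_apply hg le_rfl hts) (le_mg hts ?_)⟩
  rintro x ⟨htx, hxs⟩
  rcases le_total x p with hxp | hpx
  · by_contra! hxa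
    have hxt : x = t := le_antisymm (le_csSup hT ⟨hxp, hxa.le⟩) htx
    exact hxa.ne (hxt ▸ hgt)
  · exact hap.trans (mg_le_apply hg hpx hxs)

lemma wg_le_of_mg_eq (hrs : r ≤ s) (h : mg g r s = a) : wg g s a ≤ r :=
  csInf_le (OrderBot.bddBelow _) ⟨hrs, h⟩

lemma wg_le_of_le_mg (hg : Continuous g) (hps : p ≤ s) (h0a : g 0 ≤ a) (hap : a ≤ mg g p s) :
    wg g s a ≤ p := by
  obtain ⟨t, htp, -, hts⟩ := exists_le_apply_eq_mg_eq_of_le_mg hg hps h0a hap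
  exact (wg_le_of_mg_eq (htp.trans hps) hts).trans htp

lemma wg_le_self (hg : Continuous g) (h0a : g 0 ≤ a) (has : a ≤ g s) : wg g s a ≤ s :=
  wg_le_of_le_mg hg le_rfl h0a ((mg_self g s).symm ▸ has)

lemma mg_wg (hg : Continuous g) (h0a : g 0 ≤ a) (has : a ≤ g s) : mg g (wg g s a) s = a := by
  obtain ⟨t, hts, hgt, hmt⟩ :=
    exists_le_apply_eq_mg_eq_of_le_mg hg le_rfl h0a ((mg_self g s).symm ▸ has)
  have hwt : wg g s a ≤ t := wg_le_of_mg_eq hts hmt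
  have hws : wg g s a ≤ s := hwt.trans hts
  have hIoc : ∀ x ∈ Ioc (wg g s a) s, a ≤ g x := by
    rintro x ⟨hwx, hxs⟩
    obtain ⟨r, ⟨-, hr⟩, hrx⟩ := exists_lt_of_csInf_lt (s := {r | r ≤ s ∧ mg g r s = a}) ⟨t, hts, hmt⟩ hwx
    exact hr ▸ mg_le_apply hg hrx.le hxs
  refine le_antisymm ((mg_le_apply hg hwt hts).trans_eq hgt) (le_mg hws fun x hx => ?_)
  rcases hws.eq_or_lt with hw | hw
  · rw [hw, Icc_self, mem_singleton_iff] at hx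
    exact hx ▸ has
  · rw [← closure_Ioc hw.ne] at hx
    exact closure_minimal hIoc (isClosed_le continuous_const hg) hx

lemma apply_wg (hg : Continuous g) (h0a : g 0 ≤ a) (has : a ≤ g s) : g (wg g s a) = a := by
  have hws := wg_le_self hg h0a has
  obtain ⟨t, htw, hgt, hmt⟩ :=
    exists_le_apply_eq_mg_eq_of_le_mg hg hws h0a (mg_wg hg h0a has).ge
  rwa [le_antisymm htw (wg_le_of_mg_eq (htw.trans hws) hmt)] at hgt

lemma wg_mono (hg : Continuous g) (h0a : g 0 ≤ a) (hab : a ≤ b) (hbs : b ≤ g s) :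
    wg g s a ≤ wg g s b :=
  wg_le_of_le_mg hg (wg_le_self hg (h0a.trans hab) hbs) h0a
    (hab.trans_eq (mg_wg hg (h0a.trans hab) hbs).symm)

lemma mg_wg_wg (hg : Continuous g) (h0a : g 0 ≤ a) (hab : a ≤ b) (hbs : b ≤ g s) :
    mg g (wg g s a) (wg g s b) = a := by
  have has := hab.trans hbs
  have hw := wg_mono hg h0a hab hbs
  have hwbs := wg_le_self hg (h0a.trans hab) hbs
  refine le_antisymm ((mg_le_apply hg le_rfl hw).trans_eq (apply_wg hg h0a has)) ?_
  exact le_mg hw fun x hx => mg_wg hg h0a has ▸ mg_le_apply hg hx.1 (hx.2.trans hwbs)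

end

theorem stmt7_general (g : ℝ≥0 → ℝ) (hcont : Continuous g)
    (h0 : g 0 = 0) (s : ℝ≥0) :
    (∀ a : ℝ, 0 ≤ a → a ≤ g s → g (wg g s a) = a) ∧
    (∀ a b : ℝ, 0 ≤ a → a ≤ b → b ≤ g s →
      mg g (wg g s a) (wg g s b) = a ∧ dg g (wg g s a) (wg g s b) = b - a) := by
  refine ⟨fun a ha has => apply_wg hcont (h0.trans_le ha) has, fun a b ha hab hbs => ?_⟩
  have h0a : g 0 ≤ a := h0.trans_le ha
  have hm := mg_wg_wg hcont h0a hab hbs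
  refine ⟨hm, ?_⟩
  rw [dg, hm, apply_wg hcont h0a (hab.trans hbs), apply_wg hcont (h0a.trans hab) hbs]
  ring

/-- **Statement 7**: for continuous `g : [0,∞) → [0,∞)` with `g(0) = 0`, fixed `s ≥ 0`
and `w(a) = inf{r ∈ [0,s] : m_g(r,s) = a}`, one has `g(w(a)) = a` for `a ∈ [0, g(s)]`,
and `m_g(w(a), w(b)) = a` and `d_g(w(a), w(b)) = b - a` for `0 ≤ a ≤ b ≤ g(s)`. -/
theorem stmt7 (g : ℝ≥0 → ℝ) (hcont : Continuous g) (hnn : ∀ x, 0 ≤ g x)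
    (h0 : g 0 = 0) (s : ℝ≥0) :
    (∀ a : ℝ, 0 ≤ a → a ≤ g s → g (wg g s a) = a) ∧
    (∀ a b : ℝ, 0 ≤ a → a ≤ b → b ≤ g s →
      mg g (wg g s a) (wg g s b) = a ∧ dg g (wg g s a) (wg g s b) = b - a) :=
  stmt7_general g hcont h0 s
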